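/- arXiv:1607.04144 — 7 statements merged into one kernel-verified Lean document; each statement's English description precedes it below -/
import Mathlib

section
/- For complex numbers μ, r, s and every natural number t, the Fuss–Catalan numbers satisfy the convolution identity A_t(μ, r+s) = ∑_{u=0}^{t} A_u(μ, r) · A_{t-u}(μ, s). -/
/-!
Both sides are polynomials in `r`, so we induct on `t` and compare them at the natural numbers.
Both satisfy the Pascal-type recurrence `A_{t+1}(μ, r+1) = A_{t+1}(μ, r) + A_t(μ, r+μ)` (the
convolution termwise), so with the induction hypothesis at `r + μ` their difference is 1-periodic
in `r`. It vanishes at `r = 0`, where `A_u(μ, 0) = 0` for `u ≥ 1`, hence on `ℕ`, hence everywhere.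
-/

open Polynomial Finset Nat

/-- The Fuss–Catalan number `A_t(μ, r)`: `A_0 = 1` and for `t ≥ 1`,
`A_t(μ, r) = (r/t!) · ∏_{j=1}^{t-1} (tμ + r - j)`. -/
noncomputable def fussCatalan (μ r : ℂ) (t : ℕ) : ℂ :=
  if t = 0 then 1
  else r / (Nat.factorial t : ℂ) *
    ∏ j ∈ Finset.Icc 1 (t - 1), ((t : ℂ) * μ + r - (j : ℂ))

theorem Polynomial.eq_of_eval_natCast_eq {R : Type*} [CommRing R] [IsDomain R] [CharZero R]
    {p q : R[X]} (h : ∀ n : ℕ, p.eval (n : R) = q.eval (n : R)) : p = q :=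
  eq_of_infinite_eval_eq p q <| (Set.infinite_range_of_injective Nat.cast_injective).mono <| by
    rintro _ ⟨n, rfl⟩
    exact h n

section

variable (μ r s : ℂ) (t : ℕ)

lemma fussCatalan_zero : fussCatalan μ r 0 = 1 := rfl

lemma fussCatalan_succ :
    fussCatalan μ r (t + 1) =
      r / (t + 1)! * (descPochhammer ℂ t).eval ((t + 1) * μ + r - 1) := by
  rw [fussCatalan, if_neg t.succ_ne_zero, descPochhammer_eval_eq_prod_range, add_tsub_cancel_right,
    ← Finset.Ico_add_one_right_eq_Icc, prod_Ico_eq_prod_range, add_tsub_cancel_right]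
  push_cast
  congr 1
  exact prod_congr rfl fun j _ => by ring

lemma fussCatalan_zero_left : fussCatalan μ 0 (t + 1) = 0 := by
  simp [fussCatalan_succ]

lemma fussCatalan_add_one_succ :
    fussCatalan μ (r + 1) (t + 1) = fussCatalan μ r (t + 1) + fussCatalan μ (r + μ) t := by
  cases t with
  | zero => simp [fussCatalan_succ, fussCatalan_zero]
  | succ t =>
    -- all three products reduce to `∏_{j<t} (c - 1 - j)` times at most one extra factor
    set c : ℂ := (t + 2) * μ + r
    rw [fussCatalan_succ, fussCatalan_succ, fussCatalan_succ,
      show ((t + 1 : ℕ) + 1) * μ + (r + 1) - 1 = c by push_cast; ring,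
      show ((t + 1 : ℕ) + 1) * μ + r - 1 = c - 1 by push_cast; ring,
      show (t + 1) * μ + (r + μ) - 1 = c - 1 by ring,
      descPochhammer_succ_eval t (c - 1), descPochhammer_succ_left, eval_mul, eval_X, eval_comp,
      eval_sub, eval_X, eval_one, factorial_succ (t + 1)]
    have ht : (t + 1 + 1 : ℂ) ≠ 0 := by norm_cast
    have hfac : ((t + 1)! : ℂ) ≠ 0 := by exact_mod_cast factorial_ne_zero _
    push_cast
    field_simp
    simp only [c]
    ring

noncomputable def fussCatalanPoly : ℕ → ℂ[X]
  | 0 => 1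
  | t + 1 => C ((t + 1)! : ℂ)⁻¹ * X * (descPochhammer ℂ t).comp (X + C ((t + 1) * μ - 1))

lemma eval_fussCatalanPoly : (fussCatalanPoly μ t).eval r = fussCatalan μ r t := by
  cases t with
  | zero => simp [fussCatalanPoly, fussCatalan_zero]
  | succ t =>
    rw [fussCatalanPoly, fussCatalan_succ, eval_mul, eval_mul, eval_comp, eval_C, eval_X, eval_add,
      eval_X, eval_C, div_eq_inv_mul]
    ring_nf

noncomputable def fussCatalanConv : ℂ :=
  ∑ u ∈ range (t + 1), fussCatalan μ r u * fussCatalan μ s (t - u)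

lemma fussCatalanConv_zero_left : fussCatalanConv μ 0 s t = fussCatalan μ s t := by
  rw [fussCatalanConv, sum_range_succ',
    sum_eq_zero fun u _ => by rw [fussCatalan_zero_left, zero_mul], fussCatalan_zero, zero_add,
    one_mul, Nat.sub_zero]

lemma fussCatalanConv_add_one_succ :
    fussCatalanConv μ (r + 1) s (t + 1) =
      fussCatalanConv μ r s (t + 1) + fussCatalanConv μ (r + μ) s t := by
  simp only [fussCatalanConv, sum_range_succ' _ (t + 1), fussCatalan_add_one_succ,
    fussCatalan_zero, Nat.add_sub_add_right, add_mul, sum_add_distrib]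
  ring

lemma fussCatalanConv_eq_eval :
    fussCatalanConv μ r s t =
      (∑ u ∈ range (t + 1), fussCatalanPoly μ u * C (fussCatalan μ s (t - u))).eval r := by
  simp only [fussCatalanConv, eval_finsetSum, eval_mul, eval_C, eval_fussCatalanPoly]

end

/-- Convolution identity: `A_t(μ, r+s) = ∑_{u=0}^{t} A_u(μ, r) · A_{t-u}(μ, s)`. -/
theorem fussCatalan_convolution (μ r s : ℂ) (t : ℕ) :
    fussCatalan μ (r + s) t =
      ∑ u ∈ Finset.range (t + 1), fussCatalan μ r u * fussCatalan μ s (t - u) := by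
  change fussCatalan μ (r + s) t = fussCatalanConv μ r s t
  induction t generalizing r with
  | zero => simp [fussCatalanConv, fussCatalan_zero]
  | succ t ih =>
    have h_nat (n : ℕ) : fussCatalan μ (n + s) (t + 1) = fussCatalanConv μ n s (t + 1) := by
      induction n with
      | zero => simp [fussCatalanConv_zero_left]
      | succ n ihn =>
        rw [Nat.cast_succ, add_right_comm, fussCatalan_add_one_succ, fussCatalanConv_add_one_succ,
          ihn, ← ih, add_right_comm]
    have h_poly : (fussCatalanPoly μ (t + 1)).comp (X + C s) =
        ∑ u ∈ range (t + 2), fussCatalanPoly μ u * C (fussCatalan μ s (t + 1 - u)) :=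
      eq_of_eval_natCast_eq fun n => by
        rw [eval_comp, eval_add, eval_X, eval_C, eval_fussCatalanPoly, h_nat, fussCatalanConv_eq_eval]
    rw [← eval_fussCatalanPoly, fussCatalanConv_eq_eval, ← h_poly, eval_comp, eval_add, eval_X,
      eval_C]
end

section
/- For complex numbers μ, r and every natural number t ≥ 1, the Fuss–Catalan numbers satisfy the recurrence A_t(μ, r+1) = A_t(μ, r) + A_{t-1}(μ, r+μ). -/
/-- Recurrence: for `t ≥ 1`, `A_t(μ, r+1) = A_t(μ, r) + A_{t-1}(μ, r+μ)`. -/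
theorem fussCatalan_recurrence (μ r : ℂ) (t : ℕ) (ht : 1 ≤ t) :
    fussCatalan μ (r + 1) t = fussCatalan μ r t + fussCatalan μ (r + μ) (t - 1) := by
  obtain _ | _ | m := t
  · omega
  · simp [fussCatalan]
  · simp only [fussCatalan, if_neg (by omega : ¬ m + 1 + 1 = 0),
      if_neg (by omega : ¬ m + 1 + 1 - 1 = 0)]
    have h3 : m + 1 - 1 = m := rfl
    have hs : m + 1 + 1 - 1 = m + 1 := rfl
    rw [hs, h3, ← Finset.Ico_add_one_right_eq_Icc 1 (m + 1), ← Finset.Ico_add_one_right_eq_Icc 1 m,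
      Finset.prod_Ico_eq_prod_range, Finset.prod_Ico_eq_prod_range,
      Finset.prod_Ico_eq_prod_range]
    have h2 : m + 1 + 1 - 1 = m + 1 := rfl
    have h4 : m + 1 - 1 = m := rfl
    rw [h2, h4]
    have e1 : ∀ j : ℕ, ((m + 1 + 1 : ℕ) : ℂ) * μ + (r + 1) - ((1 + j : ℕ) : ℂ)
        = ((m + 1 + 1 : ℕ) : ℂ) * μ + r - ((j : ℕ) : ℂ) := by
      intro j; push_cast; ring
    have e3 : ∀ j : ℕ, ((m + 1 : ℕ) : ℂ) * μ + (r + μ) - ((1 + j : ℕ) : ℂ)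
        = ((m + 1 + 1 : ℕ) : ℂ) * μ + r - ((1 + j : ℕ) : ℂ) := by
      intro j; push_cast; ring
    simp only [e1, e3]
    rw [Finset.prod_range_succ'
      (fun j => ((m + 1 + 1 : ℕ) : ℂ) * μ + r - ((j : ℕ) : ℂ)),
      Finset.prod_range_succ]
    have e4 : ∀ j : ℕ, ((m + 1 + 1 : ℕ) : ℂ) * μ + r - ((j + 1 : ℕ) : ℂ)
        = ((m + 1 + 1 : ℕ) : ℂ) * μ + r - ((1 + j : ℕ) : ℂ) := by
      intro j; push_cast; ring
    simp only [e4]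
    obtain ⟨P, hP⟩ : ∃ P : ℂ,
        ∏ j ∈ Finset.range m, (((m + 1 + 1 : ℕ) : ℂ) * μ + r - ((1 + j : ℕ) : ℂ)) = P :=
      ⟨_, rfl⟩
    rw [hP]
    have hf2 : ((Nat.factorial (m + 1) : ℕ) : ℂ) ≠ 0 := by
      exact_mod_cast Nat.factorial_ne_zero _
    have hm : ((m + 1 + 1 : ℕ) : ℂ) ≠ 0 := Nat.cast_ne_zero.mpr (by omega)
    have hm2 : ((m : ℂ) + 1 + 1) ≠ 0 := by push_cast at hm; exact hm
    have hfac : ((Nat.factorial (m + 1 + 1) : ℕ) : ℂ)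
        = ((m + 1 + 1 : ℕ) : ℂ) * ((Nat.factorial (m + 1) : ℕ) : ℂ) := by
      rw [Nat.factorial_succ]; push_cast; ring
    rw [hfac]
    push_cast
    field_simp
    ring
end

section
/- Let m ≥ 2 be an integer and let z be a complex number with |z| < (m-1)^{m-1}/m^m. Then the power series f(z) = ∑_{t=0}^∞ A_t(m,1) z^t converges absolutely and its sum satisfies f(z) = 1 + z·f(z)^m. -/
/-!
Write `R s t = s/(mt+s) · C(mt+s, t)` for the Raney numbers, so that `A_t(m,1) = R 1 t`. They are
determined by `R s 0 = 1`, `R 0 (t+1) = 0` and `R (s+1) (t+1) = R s (t+1) + R (s+m) t`. This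
recursion alone gives the convolution identity `∑_{i+j=t} R r i · R s j = R (r+s) t`, hence
`f(z)^s = ∑_t R s t · z^t`, and `R 1 (t+1) = R m t`, which is `f = 1 + z f^m`. Absolute
convergence: the recursion propagates a bound `R s t ≤ a^s b^t` whenever `b + a^m ≤ a b`, and
`a = m/(m-1)`, `b = m^m/(m-1)^(m-1)` satisfy this with equality; `1/b` is the radius.
-/

/-- Fuss–Catalan number with integer parameter `m`:
`A_t(m,1) = (1/((m-1)t+1)) · C(mt, t)`, as a complex number. -/
noncomputable def fcInt (m t : ℕ) : ℂ :=
  (Nat.choose (m * t) t : ℂ) / (((m : ℂ) - 1) * t + 1)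

open Finset

/-- The Raney numbers `s/(mt+s) · C(mt+s, t)`, through their recursion; see
`mul_raney_eq_mul_choose`. -/
def raney (m : ℕ) : ℕ → ℕ → ℕ
  | _, 0 => 1
  | 0, _ + 1 => 0
  | s + 1, t + 1 => raney m s (t + 1) + raney m (s + m) t
termination_by s t => (t, s)

section

variable {m : ℕ}

@[simp] lemma raney_zero_right (s : ℕ) : raney m s 0 = 1 := by simp [raney]

@[simp] lemma raney_zero_succ (t : ℕ) : raney m 0 (t + 1) = 0 := by simp [raney]

lemma raney_succ_succ (s t : ℕ) :
    raney m (s + 1) (t + 1) = raney m s (t + 1) + raney m (s + m) t := by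
  rw [raney]

lemma raney_one_succ (t : ℕ) : raney m 1 (t + 1) = raney m m t := by
  simp [raney_succ_succ]

lemma mul_raney_eq_mul_choose (hm : 0 < m) (s t : ℕ) :
    (m * t + s) * raney m s t = s * (m * t + s).choose t := by
  induction s, t using raney.induct m with
  | case1 s => simp
  | case2 t => simp
  | case3 s t ih₁ ih₂ =>
    set N := m * (t + 1) + s with hN
    have hNpos : 0 < N := by positivity
    have htN : t ≤ N := by nlinarith
    have hpascal := Nat.choose_succ_right_eq N t
    rw [raney_succ_succ, show m * (t + 1) + (s + 1) = N + 1 by omega,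
      Nat.choose_succ_succ]
    rw [show m * t + (s + m) = N by rw [hN]; ring] at ih₂
    -- after multiplying by `N`, Pascal's rule and `C(N, t+1) (t+1) = C(N, t) (N - t)` suffice
    refine Nat.eq_of_mul_eq_mul_left hNpos ?_
    have hNz : (N : ℤ) = m * (t + 1) + s := by rw [hN]; push_cast; ring
    zify [htN] at hpascal ih₁ ih₂ ⊢
    linear_combination (N + 1 : ℤ) * ih₁ + (N + 1 : ℤ) * ih₂ - (m : ℤ) * hpascal
      - ((N.choose t : ℤ) + N.choose (t + 1)) * hNz

lemma raney_one_mul_eq_choose (hm : 0 < m) (t : ℕ) :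
    raney m 1 t * (m * t + 1 - t) = (m * t).choose t := by
  refine Nat.eq_of_mul_eq_mul_left (by positivity : 0 < m * t + 1) ?_
  rw [← mul_assoc, mul_raney_eq_mul_choose hm, one_mul, ← Nat.choose_mul_succ_eq, mul_comm]

lemma fcInt_eq_raney (hm : 0 < m) (t : ℕ) : fcInt m t = raney m 1 t := by
  have htm : t ≤ m * t := Nat.le_mul_of_pos_left t hm
  have hden : ((m : ℂ) - 1) * t + 1 = ((m * t + 1 - t : ℕ) : ℂ) := by
    push_cast [Nat.sub_add_comm htm, Nat.cast_sub htm]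
    ring
  have hden_ne : ((m * t + 1 - t : ℕ) : ℂ) ≠ 0 := Nat.cast_ne_zero.mpr (by omega)
  rw [fcInt, hden, div_eq_iff hden_ne]
  exact_mod_cast (raney_one_mul_eq_choose hm t).symm

lemma sum_antidiagonal_raney (r t s : ℕ) :
    ∑ p ∈ antidiagonal t, raney m r p.1 * raney m s p.2 = raney m (r + s) t := by
  induction t generalizing s with
  | zero => simp
  | succ t iht =>
    induction s with
    | zero => simp [Nat.sum_antidiagonal_succ']
    | succ s ihs =>
      rw [Nat.sum_antidiagonal_succ'] at ihs ⊢
      simp only [raney_zero_right, raney_succ_succ, mul_add, sum_add_distrib, iht] at ihs ⊢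
      rw [← add_assoc r s 1, raney_succ_succ, ← ihs, add_assoc r s m]
      ring

lemma raney_le_pow_mul_pow {a b : ℝ} (ha : 1 ≤ a) (hb : 0 ≤ b) (hab : b + a ^ m ≤ a * b)
    (s t : ℕ) : (raney m s t : ℝ) ≤ a ^ s * b ^ t := by
  induction s, t using raney.induct m with
  | case1 s => simpa using one_le_pow₀ ha
  | case2 t => rw [raney_zero_succ, Nat.cast_zero]; positivity
  | case3 s t ih₁ ih₂ =>
    have ha0 : 0 ≤ a := by linarith
    calc (raney m (s + 1) (t + 1) : ℝ)
        = raney m s (t + 1) + raney m (s + m) t := by rw [raney_succ_succ]; push_cast; rfl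
      _ ≤ a ^ s * b ^ (t + 1) + a ^ (s + m) * b ^ t := add_le_add ih₁ ih₂
      _ = a ^ s * b ^ t * (b + a ^ m) := by ring
      _ ≤ a ^ s * b ^ t * (a * b) := by gcongr
      _ = a ^ (s + 1) * b ^ (t + 1) := by ring

lemma raney_le_of_two_le (hm : 2 ≤ m) (s t : ℕ) :
    (raney m s t : ℝ) ≤ (m / (m - 1 : ℝ)) ^ s * ((m : ℝ) ^ m / ((m : ℝ) - 1) ^ (m - 1)) ^ t := by
  have hm1 : (0 : ℝ) < m - 1 := by
    have : (2 : ℝ) ≤ m := by exact_mod_cast hm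
    linarith
  refine raney_le_pow_mul_pow ?_ (by positivity) (le_of_eq ?_) s t
  · rw [one_le_div hm1]; linarith
  · have hpow : ((m : ℝ) - 1) ^ m = ((m : ℝ) - 1) ^ (m - 1) * (m - 1) := by
      rw [← pow_succ, Nat.sub_add_cancel (by omega)]
    rw [div_pow, hpow]
    field_simp
    ring

lemma summable_norm_raney_mul_pow (hm : 2 ≤ m) (s : ℕ) {z : ℂ}
    (hz : ‖z‖ < ((m : ℝ) - 1) ^ (m - 1) / (m : ℝ) ^ m) :
    Summable fun t => ‖(raney m s t : ℂ) * z ^ t‖ := by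
  set b : ℝ := (m : ℝ) ^ m / ((m : ℝ) - 1) ^ (m - 1)
  have hb : 0 < b := by
    have : (1 : ℝ) < m := by exact_mod_cast hm
    have : (0 : ℝ) < m - 1 := by linarith
    positivity
  have hratio : ‖z‖ * b < 1 := by
    rwa [← lt_div_iff₀ hb, one_div, inv_div]
  refine Summable.of_nonneg_of_le (fun t => norm_nonneg _) (fun t => ?_)
    ((summable_geometric_of_lt_one (by positivity) hratio).mul_left ((m / (m - 1 : ℝ)) ^ s))
  rw [norm_mul, norm_pow, Complex.norm_natCast, mul_pow, ← mul_assoc, mul_right_comm]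
  gcongr
  exact raney_le_of_two_le hm s t

noncomputable def raneySeries (m s : ℕ) (z : ℂ) : ℂ := ∑' t, (raney m s t : ℂ) * z ^ t

lemma raneySeries_zero_left (z : ℂ) : raneySeries m 0 z = 1 := by
  rw [raneySeries, tsum_eq_single 0]
  · simp
  · rintro (_ | t) ht
    · contradiction
    · simp

lemma raneySeries_add (hm : 2 ≤ m) (r s : ℕ) {z : ℂ}
    (hz : ‖z‖ < ((m : ℝ) - 1) ^ (m - 1) / (m : ℝ) ^ m) :
    raneySeries m (r + s) z = raneySeries m r z * raneySeries m s z := by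
  rw [raneySeries, raneySeries, raneySeries, tsum_mul_tsum_eq_tsum_sum_antidiagonal_of_summable_norm
    (summable_norm_raney_mul_pow hm r hz) (summable_norm_raney_mul_pow hm s hz)]
  refine tsum_congr fun t => ?_
  rw [← sum_antidiagonal_raney r t s, Nat.cast_sum, sum_mul]
  refine sum_congr rfl fun p hp => ?_
  rw [← mem_antidiagonal.mp hp, pow_add]
  push_cast
  ring

lemma raneySeries_one_pow (hm : 2 ≤ m) (k : ℕ) {z : ℂ}
    (hz : ‖z‖ < ((m : ℝ) - 1) ^ (m - 1) / (m : ℝ) ^ m) :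
    raneySeries m 1 z ^ k = raneySeries m k z := by
  induction k with
  | zero => rw [pow_zero, raneySeries_zero_left]
  | succ k ih => rw [pow_succ, ih, raneySeries_add hm k 1 hz]

lemma raneySeries_one_eq (hm : 2 ≤ m) {z : ℂ}
    (hz : ‖z‖ < ((m : ℝ) - 1) ^ (m - 1) / (m : ℝ) ^ m) :
    raneySeries m 1 z = 1 + z * raneySeries m m z := by
  rw [raneySeries, (summable_norm_raney_mul_pow hm 1 hz).of_norm.tsum_eq_zero_add, raneySeries,
    ← tsum_mul_left]
  simp only [raney_zero_right, raney_one_succ, pow_succ]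
  congr 1
  · simp
  · exact tsum_congr fun t => by ring

/-- For `m ≥ 2` and `|z| < (m-1)^{m-1}/m^m`, the series `f(z) = ∑_t A_t(m,1) z^t`
converges absolutely and its sum satisfies `f = 1 + z f^m`. -/
theorem fussCatalan_genfun_eq (m : ℕ) (hm : 2 ≤ m) (z : ℂ)
    (hz : ‖z‖ < ((m : ℝ) - 1) ^ (m - 1) / (m : ℝ) ^ m) :
    Summable (fun t : ℕ => ‖fcInt m t * z ^ t‖) ∧
      (∑' t : ℕ, fcInt m t * z ^ t) = 1 + z * (∑' t : ℕ, fcInt m t * z ^ t) ^ m := by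
  simp only [fcInt_eq_raney (by omega : 0 < m)]
  refine ⟨summable_norm_raney_mul_pow hm 1 hz, ?_⟩
  change raneySeries m 1 z = 1 + z * raneySeries m 1 z ^ m
  rw [raneySeries_one_pow hm m hz, raneySeries_one_eq hm hz]
end
end

section
/- For k ≥ 1, complex tuples μ = (μ_1,…,μ_k), complex r, s, and any nonnegative integer tuple t = (t_1,…,t_k), the multiparameter Fuss–Catalan numbers satisfy 𝒜_t(μ, r+s) = ∑_{u ≤ t} 𝒜_u(μ, r) · 𝒜_{t-u}(μ, s), where the sum is over tuples u with 0 ≤ u_i ≤ t_i componentwise. -/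
/-!
The polynomial `x ↦ 𝒜_t(μ, x)` satisfies the difference equation
`𝒜_t(μ, x + 1) = 𝒜_t(μ, x) + ∑_{i, t_i > 0} 𝒜_{t - e_i}(μ, x + μ_i)`.
Assume the identity for all tuples of smaller weight `|t|`. Applying the difference equation to
both sides, the correction terms match by this induction hypothesis, so the difference of the two
sides is a `1`-periodic polynomial in `s`, hence constant. It vanishes at `s = 0`, because
`𝒜_t(μ, 0) = [t = 0]`.
-/

/-- Multiparameter Fuss–Catalan number `𝒜_t(μ, r)`:
`𝒜_0 = 1` and for `|t| > 0`, `𝒜_t(μ, r) = (r/(t_1!⋯t_k!)) ∏_{j=1}^{|t|-1}(t·μ + r - j)`. -/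
noncomputable def mfc {k : ℕ} (μ : Fin k → ℂ) (r : ℂ) (t : Fin k → ℕ) : ℂ :=
  if (∑ i, t i) = 0 then 1
  else r / (∏ i, ((t i).factorial : ℂ)) *
    ∏ j ∈ Finset.Icc 1 ((∑ i, t i) - 1), ((∑ i, (t i : ℂ) * μ i) + r - (j : ℂ))

open Finset Polynomial

theorem prod_Icc_one_sub_eq_descPochhammer_eval {R : Type*} [CommRing R] (y : R) (m : ℕ) :
    ∏ j ∈ Icc 1 m, (y - j) = (descPochhammer R m).eval (y - 1) := by
  induction m with
  | zero => simp
  | succ m ih =>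
    rw [prod_Icc_succ_top (by omega), ih, descPochhammer_succ_eval]
    push_cast
    ring

theorem Polynomial.eq_C_eval_zero_of_periodic {R : Type*} [CommRing R] [IsDomain R] [CharZero R]
    {p : R[X]} (h : Function.Periodic p.eval 1) : p = C (p.eval 0) :=
  eq_of_infinite_eval_eq _ _ <| (Set.infinite_range_of_injective Nat.cast_injective).mono <| by
    rintro _ ⟨n, rfl⟩
    simpa using h.nat_mul_eq n

section Single
variable {ι : Type*} [DecidableEq ι]

theorem exists_eq_add_single {t : ι → ℕ} {i : ι} (hi : t i ≠ 0) :
    ∃ t' : ι → ℕ, t = t' + Pi.single i 1 :=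
  ⟨t - Pi.single i 1, funext fun l => by
    rcases eq_or_ne l i with rfl | hl
    · simp only [Pi.add_apply, Pi.sub_apply, Pi.single_eq_same]
      omega
    · simp [hl]⟩

variable [Fintype ι]

theorem sum_add_single (t : ι → ℕ) (i : ι) :
    ∑ l, (t + Pi.single i 1 : ι → ℕ) l = ∑ l, t l + 1 := by
  simp [sum_add_distrib]

theorem sum_natCast_add_single_mul {R : Type*} [CommSemiring R] (t : ι → ℕ) (i : ι) (μ : ι → R) :
    ∑ l, ((t + Pi.single i 1 : ι → ℕ) l : R) * μ l = ∑ l, (t l : R) * μ l + μ i := by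
  simp [add_mul, sum_add_distrib, Pi.single_apply]

theorem prod_factorial_add_single (t : ι → ℕ) (i : ι) :
    ∏ l, ((t + Pi.single i 1 : ι → ℕ) l).factorial = (t i + 1) * ∏ l, (t l).factorial := by
  rw [Fintype.prod_eq_mul_prod_compl i, Fintype.prod_eq_mul_prod_compl i (fun l => (t l).factorial),
    ← mul_assoc]
  congr 1
  · simp [Nat.factorial_succ]
  · refine prod_congr rfl fun l hl => ?_
    simp [(by simpa using hl : l ≠ i)]

theorem sum_sub_single_lt {t : ι → ℕ} {i : ι} (hi : t i ≠ 0) :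
    ∑ l, (t - Pi.single i 1 : ι → ℕ) l < ∑ l, t l := by
  obtain ⟨t', rfl⟩ := exists_eq_add_single hi
  rw [add_tsub_cancel_right, sum_add_single]
  omega

theorem sum_Iic_ite_sub_apply {M : Type*} [AddCommMonoid M] (t : ι → ℕ) (i : ι) (f : (ι → ℕ) → M) :
    ∑ u ∈ Iic t, (if (t - u) i = 0 then 0 else f u) =
      if t i = 0 then 0 else ∑ u ∈ Iic (t - Pi.single i 1), f u := by
  split_ifs with hi
  · exact sum_eq_zero fun u _ => if_pos (by simp [hi])
  · rw [sum_ite, sum_const_zero, zero_add]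
    congr 1
    ext u
    simp only [mem_filter, mem_Iic, Pi.le_def, Pi.sub_apply, Pi.single_apply]
    constructor
    · rintro ⟨hle, hlt⟩ l
      split_ifs with hl <;> grind
    · intro h
      refine ⟨fun l => ?_, ?_⟩ <;> grind

end Single

section Mfc
variable {k : ℕ} (μ : Fin k → ℂ)

theorem mfc_of_sum_eq_zero {t : Fin k → ℕ} (h : ∑ i, t i = 0) (x : ℂ) : mfc μ x t = 1 := if_pos h

theorem mfc_of_sum_eq_succ {t : Fin k → ℕ} {m : ℕ} (h : ∑ i, t i = m + 1) (x : ℂ) :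
    mfc μ x t = x / (∏ i, ((t i).factorial : ℂ)) *
      (descPochhammer ℂ m).eval (∑ i, (t i : ℂ) * μ i + x - 1) := by
  rw [mfc, if_neg (by omega), h, Nat.add_sub_cancel, prod_Icc_one_sub_eq_descPochhammer_eval]

theorem mfc_zero (t : Fin k → ℕ) : mfc μ 0 t = if t = 0 then 1 else 0 := by
  by_cases h : ∑ i, t i = 0
  · have ht : t = 0 := funext fun i => sum_eq_zero_iff.mp h i (mem_univ i)
    rw [mfc_of_sum_eq_zero μ h, if_pos ht]
  · rw [mfc, if_neg h, zero_div, zero_mul, if_neg]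
    rintro rfl
    simp at h

theorem mfc_sub_single_of_sum_eq {t : Fin k → ℕ} {m : ℕ} (h : ∑ i, t i = m + 2) {i : Fin k}
    (hi : t i ≠ 0) (x : ℂ) :
    mfc μ x (t - Pi.single i 1) = t i * x / (∏ l, ((t l).factorial : ℂ)) *
      (descPochhammer ℂ m).eval (∑ l, (t l : ℂ) * μ l - μ i + x - 1) := by
  obtain ⟨t, rfl⟩ := exists_eq_add_single hi
  rw [sum_add_single] at h
  rw [add_tsub_cancel_right, mfc_of_sum_eq_succ μ (m := m) (by omega), sum_natCast_add_single_mul,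
    add_sub_cancel_right, ← Nat.cast_prod, ← Nat.cast_prod, prod_factorial_add_single]
  simp only [Pi.add_apply, Pi.single_eq_same]
  push_cast
  field_simp

theorem mfc_add_one (x : ℂ) (t : Fin k → ℕ) :
    mfc μ (x + 1) t =
      mfc μ x t + ∑ i, if t i = 0 then 0 else mfc μ (x + μ i) (t - Pi.single i 1) := by
  rcases hn : ∑ i, t i with _ | _ | m
  · simp [mfc_of_sum_eq_zero μ hn, sum_eq_zero_iff.mp hn]
  · have hle : ∀ l, t l ≤ 1 := fun l => by
      have := single_le_sum (fun _ _ => Nat.zero_le _) (mem_univ l) (f := t)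
      omega
    have hD : ∏ l, ((t l).factorial : ℂ) = 1 :=
      prod_eq_one fun l _ => by rw [Nat.factorial_eq_one.mpr (hle l), Nat.cast_one]
    have hterm : ∀ i, (if t i = 0 then 0 else mfc μ (x + μ i) (t - Pi.single i 1)) = (t i : ℂ) := by
      intro i
      split_ifs with hi
      · simp [hi]
      · have hti : t i = 1 := by have := hle i; omega
        rw [mfc_of_sum_eq_zero μ (by have := sum_sub_single_lt hi; omega), hti, Nat.cast_one]
    rw [sum_congr rfl fun i _ => hterm i, ← Nat.cast_sum, hn, mfc_of_sum_eq_succ μ hn,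
      mfc_of_sum_eq_succ μ hn, hD]
    simp
  · set c := ∑ l, (t l : ℂ) * μ l
    set P := (descPochhammer ℂ m).eval (c + x - 1)
    have hterm : ∀ i, (if t i = 0 then 0 else mfc μ (x + μ i) (t - Pi.single i 1)) =
        t i * (x + μ i) / (∏ l, ((t l).factorial : ℂ)) * P := by
      intro i
      split_ifs with hi
      · simp [hi]
      · rw [mfc_sub_single_of_sum_eq μ hn hi,
          show ∑ l, (t l : ℂ) * μ l - μ i + (x + μ i) - 1 = c + x - 1 by ring]
    have hsum : ∑ i, (t i : ℂ) * (x + μ i) = (m + 2) * x + c := by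
      simp only [c, mul_add, sum_add_distrib, ← sum_mul, ← Nat.cast_sum, hn]
      push_cast
      ring
    have hP₁ : (descPochhammer ℂ (m + 1)).eval (c + (x + 1) - 1) = (c + x) * P := by
      rw [show c + (x + 1) - 1 = c + x by ring, descPochhammer_succ_left, eval_mul, eval_comp]
      simp only [eval_X, eval_sub, eval_one, P]
    rw [sum_congr rfl fun i _ => hterm i, ← sum_mul, ← sum_div, hsum, mfc_of_sum_eq_succ μ hn,
      mfc_of_sum_eq_succ μ hn, hP₁, descPochhammer_succ_eval]
    field_simp
    ring

end Mfc

noncomputable def mfcPoly {k : ℕ} (μ : Fin k → ℂ) (t : Fin k → ℕ) : ℂ[X] :=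
  if ∑ i, t i = 0 then 1
  else C (∏ i, ((t i).factorial : ℂ))⁻¹ * X *
    ∏ j ∈ Icc 1 (∑ i, t i - 1), (X + C (∑ i, (t i : ℂ) * μ i - j))

theorem eval_mfcPoly {k : ℕ} (μ : Fin k → ℂ) (x : ℂ) (t : Fin k → ℕ) :
    (mfcPoly μ t).eval x = mfc μ x t := by
  unfold mfcPoly mfc
  split_ifs
  · simp
  · simp only [eval_mul, eval_C, eval_X, eval_prod, eval_add]
    rw [div_eq_inv_mul]
    congr 1
    exact prod_congr rfl fun j _ => by ring

noncomputable def mfcConv {k : ℕ} (μ : Fin k → ℂ) (r s : ℂ) (t : Fin k → ℕ) : ℂ :=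
  ∑ u ∈ Iic t, mfc μ r u * mfc μ s (t - u)

section Conv
variable {k : ℕ} (μ : Fin k → ℂ) (r : ℂ)

theorem mfcConv_zero (t : Fin k → ℕ) : mfcConv μ r 0 t = mfc μ r t := by
  rw [mfcConv, sum_eq_single_of_mem t (mem_Iic.mpr le_rfl), tsub_self, mfc_zero, if_pos rfl,
    mul_one]
  intro u hu hne
  rw [mfc_zero, if_neg fun h => hne (le_antisymm (mem_Iic.mp hu) (tsub_eq_zero_iff_le.mp h)),
    mul_zero]

theorem exists_eval_eq_mfcConv_sub (t : Fin k → ℕ) :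
    ∃ p : ℂ[X], ∀ s, p.eval s = mfcConv μ r s t - mfc μ (r + s) t :=
  ⟨∑ u ∈ Iic t, C (mfc μ r u) * mfcPoly μ (t - u) - (mfcPoly μ t).comp (C r + X), fun s => by
    simp [eval_finsetSum, eval_mfcPoly, mfcConv]⟩

theorem periodic_mfcConv_sub {t : Fin k → ℕ}
    (ih : ∀ i, t i ≠ 0 → ∀ s, mfc μ (r + s) (t - Pi.single i 1) = mfcConv μ r s (t - Pi.single i 1)) :
    Function.Periodic (fun s => mfcConv μ r s t - mfc μ (r + s) t) 1 := by
  intro s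
  have hcorr : ∑ u ∈ Iic t, mfc μ r u *
        ∑ i, (if (t - u) i = 0 then 0 else mfc μ (s + μ i) (t - u - Pi.single i 1)) =
      ∑ i, if t i = 0 then 0 else mfc μ (r + s + μ i) (t - Pi.single i 1) := by
    simp_rw [mul_sum, mul_ite, mul_zero]
    rw [sum_comm]
    refine sum_congr rfl fun i _ => ?_
    refine (sum_Iic_ite_sub_apply t i _).trans ?_
    split_ifs with hi
    · rfl
    · rw [add_assoc, ih i hi, mfcConv]
      exact sum_congr rfl fun u _ => by rw [tsub_right_comm]
  dsimp only
  rw [← add_assoc, mfc_add_one, ← hcorr, mfcConv, mfcConv]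
  simp only [mfc_add_one μ s, mul_add, sum_add_distrib]
  ring

end Conv

theorem mfc_convolution_general {k : ℕ} (μ : Fin k → ℂ) (r s : ℂ)
    (t : Fin k → ℕ) :
    mfc μ (r + s) t = ∑ u ∈ Finset.Iic t, mfc μ r u * mfc μ s (t - u) := by
  induction hn : ∑ i, t i using Nat.strong_induction_on generalizing t s with
  | _ n ih =>
  obtain ⟨p, hp⟩ := exists_eval_eq_mfcConv_sub μ r t
  have hper : Function.Periodic p.eval 1 := by
    simpa only [hp] using periodic_mfcConv_sub μ r fun i hi s' =>
      ih _ (hn ▸ sum_sub_single_lt hi) s' _ rfl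
  have h0 : p.eval 0 = 0 := by rw [hp, mfcConv_zero, add_zero, sub_self]
  have hs := congrArg (eval s) (Polynomial.eq_C_eval_zero_of_periodic hper)
  rw [hp, h0, eval_C, sub_eq_zero] at hs
  exact hs.symm

/-- Multiparameter convolution identity:
`𝒜_t(μ, r+s) = ∑_{0 ≤ u ≤ t} 𝒜_u(μ, r) · 𝒜_{t-u}(μ, s)` (componentwise `u ≤ t`). -/
theorem mfc_convolution {k : ℕ} (hk : 1 ≤ k) (μ : Fin k → ℂ) (r s : ℂ)
    (t : Fin k → ℕ) :
    mfc μ (r + s) t = ∑ u ∈ Finset.Iic t, mfc μ r u * mfc μ s (t - u) :=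
  mfc_convolution_general μ r s t
end

section
/- Let P be a polynomial of degree n with coefficients a₀,…,a_n and let m be a positive integer. Then the discriminant of the polynomial Q(x) = P(x^m) (of degree nm) equals (-1)^{nm(m-1)/2} · m^{mn} · (a₀ a_n)^{m-1} · (disc P)^m. -/
open Polynomial

open Finset in

/- pairs lemma -/
lemma pairs_aux (d : ℕ) (v : Fin d → ℂ) :
    ∏ i, ∏ k ∈ Finset.univ.erase i, (v i - v k) =
      (-1 : ℂ)^(d*(d-1)/2) *
        ∏ i, ∏ j ∈ Finset.univ.filter (fun j => i < j), (v i - v j)^2 := by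
  have herase : ∀ i : Fin d, (Finset.univ.erase i) =
      (Finset.univ.filter (fun j => i < j)) ∪ (Finset.univ.filter (fun j => j < i)) := by
    intro i; ext j
    simp only [Finset.mem_erase, Finset.mem_union, Finset.mem_filter, Finset.mem_univ,
      true_and, and_true]
    constructor
    · intro h; exact h.lt_or_gt.symm
    · rintro (h | h) <;> [exact h.ne'; exact h.ne]
  have hdisj : ∀ i : Fin d, Disjoint (Finset.univ.filter (fun j => i < j))
      (Finset.univ.filter (fun j => j < i)) := by
    intro i
    simp only [Finset.disjoint_filter]
    intro x _ h1 h2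
    exact absurd (h1.trans h2) (lt_irrefl i)
  calc ∏ i, ∏ k ∈ Finset.univ.erase i, (v i - v k)
      = ∏ i, ((∏ k ∈ Finset.univ.filter (fun j => i < j), (v i - v k)) *
          (∏ k ∈ Finset.univ.filter (fun j => j < i), (v i - v k))) := by
        refine Finset.prod_congr rfl fun i _ => ?_
        rw [herase i, Finset.prod_union (hdisj i)]
    _ = (∏ i, ∏ k ∈ Finset.univ.filter (fun j => i < j), (v i - v k)) *
        (∏ i, ∏ k ∈ Finset.univ.filter (fun j => j < i), (v i - v k)) := by
        rw [Finset.prod_mul_distrib]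
    _ = (∏ i, ∏ k ∈ Finset.univ.filter (fun j => i < j), (v i - v k)) *
        (∏ i, ∏ k ∈ Finset.univ.filter (fun j => i < j), (v k - v i)) := by
        congr 1
        exact Finset.prod_comm' (by intro x y; simp [and_comm])
    _ = ∏ i, ∏ k ∈ Finset.univ.filter (fun j => i < j), ((v i - v k) * (v k - v i)) := by
        rw [← Finset.prod_mul_distrib]
        exact Finset.prod_congr rfl fun i _ => (Finset.prod_mul_distrib).symm
    _ = ∏ i, ∏ k ∈ Finset.univ.filter (fun j => i < j), ((-1 : ℂ) * (v i - v k)^2) := by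
        refine Finset.prod_congr rfl fun i _ => Finset.prod_congr rfl fun k _ => ?_
        ring
    _ = (-1 : ℂ)^(d*(d-1)/2) *
        ∏ i, ∏ j ∈ Finset.univ.filter (fun j => i < j), (v i - v j)^2 := by
        simp_rw [Finset.prod_mul_distrib, Finset.prod_const]
        rw [Finset.prod_pow_eq_pow_sum]
        congr 2
        have hIoi : ∀ x : Fin d, (Finset.univ.filter (fun j => x < j)) = Finset.Ioi x := by
          intro x; ext j; simp
        simp_rw [hIoi, Fin.card_Ioi]
        rw [Fin.sum_univ_eq_sum_range (fun i => d - 1 - i),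
          Finset.sum_range_reflect (fun i => i) d, Finset.sum_range_id]

lemma two_dvd_mul_pred (k : ℕ) : 2 ∣ k * (k - 1) := by
  rcases Nat.even_or_odd k with h | h
  · exact Dvd.dvd.mul_right h.two_dvd _
  · obtain ⟨j, hj⟩ := h
    exact Dvd.dvd.mul_left (⟨j, by omega⟩ : 2 ∣ k - 1) _

lemma even_sign_exp (n m : ℕ) (hn : 1 ≤ n) (hm : 1 ≤ m) :
    Even (n*m*(n*m-1)/2 + n*m*(m-1) + n*(n-1)/2*m + n*m*(m-1)/2) := by
  have d1 : 2 ∣ n*m*(n*m-1) := two_dvd_mul_pred (n*m)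
  have d2 : 2 ∣ n*(n-1) := two_dvd_mul_pred n
  have d3 : 2 ∣ n*m*(m-1) := by
    have := two_dvd_mul_pred m
    calc (2:ℕ) ∣ m*(m-1) := this
      _ ∣ n*m*(m-1) := by rw [mul_assoc]; exact Dvd.dvd.mul_left dvd_rfl n
  set A := n*m*(n*m-1)/2 + n*m*(m-1) + n*(n-1)/2*m + n*m*(m-1)/2 with hA
  have h2A : 2*A = n*m*(n*m-1) + 2*(n*m*(m-1)) + n*(n-1)*m + n*m*(m-1) := by
    rw [hA]
    rw [Nat.mul_add, Nat.mul_add, Nat.mul_add, Nat.mul_div_cancel' d1, Nat.mul_div_cancel' d3,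
      ← Nat.mul_assoc 2 _ m, Nat.mul_div_cancel' d2]
  have h4 : (4:ℕ) ∣ 2*A := by
    rw [← ZMod.natCast_eq_zero_iff, h2A]
    have hnm : 1 ≤ n*m := Nat.one_le_iff_ne_zero.mpr (by positivity)
    push_cast [Nat.cast_sub hm, Nat.cast_sub hn, Nat.cast_sub hnm]
    have key : ∀ a b : ZMod 4,
        a*b*(a*b-1) + 2*(a*b*(b-1)) + a*(a-1)*b + a*b*(b-1) = 0 := by decide
    exact key n m
  obtain ⟨k, hk⟩ := h4
  exact ⟨k, by omega⟩

lemma neg_one_pow_eq_of_even_add {A B : ℕ} (h : Even (A + B)) :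
    ((-1 : ℂ))^A = (-1)^B := by
  have h1 : ((-1 : ℂ))^(A+B) = 1 := h.neg_one_pow
  have h2 : ((-1 : ℂ))^B * (-1)^B = 1 := by
    rw [← pow_add]; exact Even.neg_one_pow ⟨B, rfl⟩
  calc ((-1:ℂ))^A = (-1)^A * ((-1)^B * (-1)^B) := by rw [h2, mul_one]
    _ = ((-1)^(A+B)) * (-1)^B := by rw [pow_add]; ring
    _ = (-1)^B := by rw [h1, one_mul]

lemma neg_one_pow_mul_eq {e : ℕ} {x y : ℂ} (h : (-1 : ℂ)^e * x = y) :
    x = (-1 : ℂ)^e * y := by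
  have h2 : ((-1 : ℂ))^e * (-1)^e = 1 := by
    rw [← pow_add]; exact Even.neg_one_pow ⟨e, rfl⟩
  calc x = ((-1:ℂ)^e * (-1)^e) * x := by rw [h2, one_mul]
    _ = (-1:ℂ)^e * ((-1)^e * x) := by ring
    _ = (-1:ℂ)^e * y := by rw [h]

/-- The discriminant of a degree-`d` polynomial with leading coefficient `c` and
roots `r 0, …, r (d-1)` (with multiplicity): `c^{2d-2} ∏_{i<j} (r_i - r_j)²`. -/
noncomputable def discOf (c : ℂ) {d : ℕ} (r : Fin d → ℂ) : ℂ :=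
  c ^ (2 * d - 2) *
    ∏ i, ∏ j ∈ Finset.univ.filter (fun j => i < j), (r i - r j) ^ 2

/-- If `P` has degree `n`, leading coefficient `c`, roots `r`, nonzero constant term,
and `Q(x) = P(x^m)` has roots `s`, then
`disc Q = (-1)^{nm(m-1)/2} m^{mn} (a₀ a_n)^{m-1} (disc P)^m`. -/
theorem disc_comp_pow (n m : ℕ) (hn : 1 ≤ n) (hm : 1 ≤ m) (c : ℂ) (hc : c ≠ 0)
    (r : Fin n → ℂ) (s : Fin (n * m) → ℂ) (P : Polynomial ℂ)
    (hP : P = C c * ∏ i, (X - C (r i)))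
    (h0 : P.coeff 0 ≠ 0)
    (hQ : P.comp (X ^ m) = C c * ∏ j, (X - C (s j))) :
    discOf c s =
      (-1) ^ (n * m * (m - 1) / 2) * (m : ℂ) ^ (m * n) *
        (P.coeff 0 * c) ^ (m - 1) * (discOf c r) ^ m := by
  classical
  have hm0 : m ≠ 0 := by omega
  set K : ℂ[X] := ∏ i, (X - C (r i)) with hK
  set F : ℂ[X] := ∏ j : Fin (n*m), (X - C (s j)) with hF
  set G : ℂ[X] := ∏ i, (X^m - C (r i)) with hG
  have hKG : K.comp (X^m) = G := by
    rw [hK, hG, Polynomial.prod_comp]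
    simp [sub_comp]
  have hFG : F = G := by
    have h1 : C c * F = C c * G := by
      rw [← hQ, hP, mul_comp, C_comp, hKG]
    exact mul_left_cancel₀ (by simpa using hc) h1
  -- derivative evals
  have hFderiv : ∀ j, eval (s j) (derivative F) = ∏ k ∈ Finset.univ.erase j, (s j - s k) := by
    intro j
    have hFn : F = Lagrange.nodal Finset.univ s := rfl
    rw [hFn, Lagrange.eval_nodal_derivative_eval_node_eq (Finset.mem_univ j),
      Lagrange.eval_nodal]
  have hKderiv : ∀ i, eval (r i) (derivative K) = ∏ k ∈ Finset.univ.erase i, (r i - r k) := by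
    intro i
    have hKn : K = Lagrange.nodal Finset.univ r := rfl
    rw [hKn, Lagrange.eval_nodal_derivative_eval_node_eq (Finset.mem_univ i),
      Lagrange.eval_nodal]
  have hGder : ∀ j, eval (s j) (derivative F) =
      (m : ℂ) * (s j)^(m-1) * eval ((s j)^m) (derivative K) := by
    intro j
    rw [hFG, ← hKG, derivative_comp, derivative_X_pow]
    simp [eval_comp]
  -- roots
  have hrootsF : F.roots = Multiset.map s Finset.univ.val := by
    rw [hF, Polynomial.roots_prod _ _ (by
      exact Finset.prod_ne_zero_iff.mpr fun i _ => X_sub_C_ne_zero (s i))]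
    simp [Polynomial.roots_X_sub_C, Multiset.bind_singleton]
  have hrootsG : G.roots = Finset.univ.val.bind (fun i => (X^m - C (r i)).roots) := by
    rw [hG]
    exact Polynomial.roots_prod _ _ (Finset.prod_ne_zero_iff.mpr
      fun i _ => (monic_X_pow_sub_C (r i) hm0).ne_zero)
  have hpow_roots : ∀ i : Fin n,
      Multiset.map (fun t => t^m) ((X^m - C (r i)).roots) = Multiset.replicate m (r i) := by
    intro i
    rw [Multiset.eq_replicate]
    constructor
    · rw [Multiset.card_map,
        Polynomial.splits_iff_card_roots.mp (IsAlgClosed.splits _),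
        natDegree_X_pow_sub_C]
    · intro b hb
      obtain ⟨t, ht, rfl⟩ := Multiset.mem_map.mp hb
      have := Polynomial.isRoot_of_mem_roots ht
      simpa [sub_eq_zero] using this
  have hmap : Multiset.map (fun j => (s j)^m) Finset.univ.val =
      Finset.univ.val.bind (fun i : Fin n => Multiset.replicate m (r i)) := by
    have h1 : Multiset.map (fun j => (s j)^m) Finset.univ.val =
        Multiset.map (fun t => t^m) (Multiset.map s Finset.univ.val) := by
      rw [Multiset.map_map]; rfl
    rw [h1, ← hrootsF, hFG, hrootsG, Multiset.map_bind]
    exact Multiset.bind_congr fun i _ => hpow_roots i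
  have hprod_pow : ∀ g : ℂ → ℂ,
      ∏ j : Fin (n*m), g ((s j)^m) = ∏ i, (g (r i))^m := by
    intro g
    have h1 : ∏ j : Fin (n*m), g ((s j)^m) =
        ((Multiset.map (fun j => (s j)^m) Finset.univ.val).map g).prod := by
      rw [Multiset.map_map]; rfl
    rw [h1, hmap, Multiset.map_bind, Multiset.prod_bind]
    simp only [Multiset.map_replicate, Multiset.prod_replicate]
    rfl
  -- product of roots
  have hprod_sj : ∏ j : Fin (n*m), (- s j) = ∏ i, (- r i) := by
    have h1 : eval 0 F = ∏ j : Fin (n*m), (- s j) := by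
      rw [hF, eval_prod]; simp
    have h2 : eval 0 G = ∏ i, (- r i) := by
      rw [hG, eval_prod]
      simp [zero_pow hm0]
    rw [← h1, ← h2, hFG]
  have ha0 : P.coeff 0 = c * ∏ i, (- r i) := by
    rw [Polynomial.coeff_zero_eq_eval_zero, hP, eval_mul, eval_C, hK, eval_prod]
    simp
  -- assemble
  set Es : ℂ := ∏ i, ∏ j ∈ Finset.univ.filter (fun j => i < j), (s i - s j)^2 with hEs
  set Er : ℂ := ∏ i, ∏ j ∈ Finset.univ.filter (fun j => i < j), (r i - r j)^2 with hEr
  set ρ : ℂ := ∏ i, (- r i) with hrho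
  have hDs : ∏ j : Fin (n*m), eval (s j) (derivative F)
      = (-1:ℂ)^((n*m)*((n*m)-1)/2) * Es := by
    simp_rw [hFderiv]
    exact pairs_aux (n*m) s
  have hDr : ∏ i, eval (r i) (derivative K) = (-1:ℂ)^(n*(n-1)/2) * Er := by
    simp_rw [hKderiv]
    exact pairs_aux n r
  have hway2 : ∏ j : Fin (n*m), eval (s j) (derivative F)
      = (m:ℂ)^(n*m) * (∏ j : Fin (n*m), s j)^(m-1) *
        (∏ i, eval (r i) (derivative K))^m := by
    simp_rw [hGder]
    rw [Finset.prod_mul_distrib, Finset.prod_mul_distrib, Finset.prod_const, Finset.prod_pow,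
      Finset.card_univ, Fintype.card_fin,
      hprod_pow (fun t => eval t (derivative K)), Finset.prod_pow]
  have hsjneg : (-1:ℂ)^(n*m) * (∏ j : Fin (n*m), s j) = ρ := by
    rw [← hprod_sj]
    have : ∀ j : Fin (n*m), - s j = (-1 : ℂ) * s j := fun j => by ring
    rw [Finset.prod_congr rfl (fun j _ => this j), Finset.prod_mul_distrib,
      Finset.prod_const, Finset.card_univ, Fintype.card_fin]
  have hsj : (∏ j : Fin (n*m), s j) = (-1:ℂ)^(n*m) * ρ := neg_one_pow_mul_eq hsjneg
  have hEsEq : Es = (-1:ℂ)^((n*m)*((n*m)-1)/2) *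
      ((m:ℂ)^(n*m) * ((-1:ℂ)^(n*m) * ρ)^(m-1) * ((-1:ℂ)^(n*(n-1)/2) * Er)^m) := by
    apply neg_one_pow_mul_eq
    rw [← hDs, hway2, hsj, hDr]
  have hsign : ((-1:ℂ))^((n*m)*((n*m)-1)/2) * ((-1:ℂ)^(n*m))^(m-1) *
      ((-1:ℂ)^(n*(n-1)/2))^m = (-1:ℂ)^(n*m*(m-1)/2) := by
    rw [← pow_mul, ← pow_mul, ← pow_add, ← pow_add]
    exact neg_one_pow_eq_of_even_add (even_sign_exp n m hn hm)
  have hcexp : 2*(n*m) - 2 = 2*(m-1) + (2*n-2)*m := by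
    have h1 : (2*n-2)*m = 2*(n*m) - 2*m := by rw [Nat.sub_mul, Nat.mul_assoc]
    have h2 : m ≤ n*m := Nat.le_mul_of_pos_left m hn
    rw [h1]
    generalize n*m = q at h2 ⊢
    omega
  have ha0' : P.coeff 0 * c = c^2 * ρ := by rw [ha0]; ring
  have hdiscS : discOf c s = c^(2*(n*m)-2) * Es := rfl
  have hdiscR : discOf c r = c^(2*n-2) * Er := rfl
  rw [hdiscS, hdiscR, hEsEq, ha0']
  have hmn : (m:ℂ)^(n*m) = (m:ℂ)^(m*n) := by rw [Nat.mul_comm]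
  calc c^(2*(n*m)-2) * ((-1:ℂ)^((n*m)*((n*m)-1)/2) *
      ((m:ℂ)^(n*m) * ((-1:ℂ)^(n*m) * ρ)^(m-1) * ((-1:ℂ)^(n*(n-1)/2) * Er)^m))
      = ((-1:ℂ)^((n*m)*((n*m)-1)/2) * ((-1:ℂ)^(n*m))^(m-1) * ((-1:ℂ)^(n*(n-1)/2))^m) *
        ((m:ℂ)^(n*m) * c^(2*(n*m)-2) * ρ^(m-1) * Er^m) := by
        rw [mul_pow, mul_pow]; ring
    _ = (-1:ℂ)^(n*m*(m-1)/2) *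
        ((m:ℂ)^(m*n) * (c^(2*(m-1)) * c^((2*n-2)*m)) * ρ^(m-1) * Er^m) := by
        rw [hsign, hcexp, pow_add, hmn]
    _ = (-1:ℂ)^(n*m*(m-1)/2) * (m:ℂ)^(m*n) * (c^2 * ρ)^(m-1) * (c^(2*n-2) * Er)^m := by
        rw [mul_pow, mul_pow, ← pow_mul, ← pow_mul]
        ring
end

section
/- For integers k ≥ 1, integer tuple μ with μ_i ≥ 2, positive integers r, p and any nonnegative integer tuple n, the identity ∑_{j ≤ n} (p + q·j) 𝒜_j(μ, a) 𝒜_{n-j}(μ, c) = ((p(a+c) + a·(q·n))/(a+c)) · 𝒜_n(μ, a+c) holds for complex a, c with a + c ≠ 0 and complex tuple q, where the sum is over tuples j with 0 ≤ j_i ≤ n_i. -/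
/-!
Call a family of polynomials `f_t(r)`, `t ∈ ℕ^k`, a solution if
`f_t(r) = f_t(r - 1) + ∑_{t_l > 0} f_{t - e_l}(r + μ_l - 1)`.
A solution is determined by its values at `r = 0` (induct on `t`, then on `r ∈ ℕ`), and
translation in `r`, the shifts `S_l f = f_{· - e_l}(· + μ_l - 1)` and convolution with a fixed
weight all commute with the recurrence, so they preserve solutions. Hence if `g` is a solution with
`g_t(0) = [t = 0]`, then `∑_{j ≤ n} f_j(a) g_{n-j}(c) = f_n(a + c)` for every solution `f`.
The family `B_t(r) = (t·μ + r)(t·μ + r - 1)⋯(t·μ + r - |t| + 1) / t!` is a solution, hence so are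
`𝒜 = B - ∑_l μ_l S_l B` and `S_i B`, and `r (S_i B)_t(r) = t_i 𝒜_t(r)`. The pairs `(f, g) = (𝒜, 𝒜)`
and `(S_i B, 𝒜)` give the `p`- and the `q`-part of the identity.
-/

open Finset Polynomial
open scoped Nat

lemma Polynomial.comp_X_add_C_comp_X_add_C {R : Type*} [CommSemiring R] (p : R[X]) (a b : R) :
    (p.comp (X + C a)).comp (X + C b) = p.comp (X + C (a + b)) := by
  rw [comp_assoc]
  simp only [add_comp, X_comp, C_comp, C_add]
  rw [add_assoc, add_comm (C b)]

lemma Polynomial.comp_X_add_C_comm {R : Type*} [CommSemiring R] (p : R[X]) (a b : R) :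
    (p.comp (X + C a)).comp (X + C b) = (p.comp (X + C b)).comp (X + C a) := by
  rw [comp_X_add_C_comp_X_add_C, comp_X_add_C_comp_X_add_C, add_comm a b]

lemma descPochhammer_eval_eq_eval_sub_one_add {R : Type*} [CommRing R] (n : ℕ) (x : R) :
    (descPochhammer R n).eval x =
      (descPochhammer R n).eval (x - 1) + n * (descPochhammer R (n - 1)).eval (x - 1) := by
  cases n with
  | zero => simp
  | succ n =>
    have h := congrArg (eval x) (descPochhammer_succ_comp_X_sub_one R n)
    simp only [eval_comp, eval_sub, eval_X, eval_one, smul_eq_mul, eval_mul, eval_add,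
      eval_natCast] at h
    simp only [Nat.add_sub_cancel]
    push_cast
    linear_combination -h

namespace MultiFussCatalan

variable {k : ℕ}

section Index

variable {t : Fin k → ℕ} {l : Fin k}

lemma single_le_of_ne_zero (h : t l ≠ 0) : Pi.single l 1 ≤ t := by
  intro i
  rcases eq_or_ne i l with rfl | hi
  · simpa [Nat.one_le_iff_ne_zero] using h
  · simp [hi]

lemma sub_single_lt (h : t l ≠ 0) : t - Pi.single l 1 < t := by
  refine lt_of_le_of_ne tsub_le_self fun heq => ?_
  have := congrFun heq l
  simp only [Pi.sub_apply, Pi.single_eq_same] at this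
  omega

lemma sum_sub_single (h : t l ≠ 0) : ∑ i, (t - Pi.single l 1 : Fin k → ℕ) i = ∑ i, t i - 1 := by
  simp only [Pi.sub_apply]
  rw [sum_tsub_distrib _ fun i _ => single_le_of_ne_zero h i, sum_pi_single']
  simp

lemma weightedSum_sub_single (h : t l ≠ 0) (w : Fin k → ℂ) :
    ∑ i, ((t - Pi.single l 1 : Fin k → ℕ) i : ℂ) * w i = ∑ i, (t i : ℂ) * w i - w l := by
  rw [show w l = ∑ i, ((Pi.single l 1 : Fin k → ℕ) i : ℂ) * w i by simp [Pi.single_apply],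
    ← sum_sub_distrib]
  refine sum_congr rfl fun i _ => ?_
  rw [Pi.sub_apply, Nat.cast_sub (single_le_of_ne_zero h i)]
  ring

lemma prod_factorial_eq_mul (h : t l ≠ 0) :
    ∏ i, ((t i)! : ℂ) = t l * ∏ i, (((t - Pi.single l 1 : Fin k → ℕ) i)! : ℂ) := by
  rw [← mul_prod_erase univ _ (mem_univ l)]
  conv_rhs => rw [← mul_prod_erase univ _ (mem_univ l), ← mul_assoc]
  congr 1
  · simp only [Pi.sub_apply, Pi.single_eq_same]
    rw [← Nat.mul_factorial_pred h]
    push_cast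
    ring
  · exact prod_congr rfl fun i hi => by simp [Pi.single_eq_of_ne (ne_of_mem_erase hi)]

lemma ne_zero_and_sub_single_ne_zero_comm {m : Fin k} :
    t l ≠ 0 ∧ (t - Pi.single l 1 : Fin k → ℕ) m ≠ 0 ↔
      t m ≠ 0 ∧ (t - Pi.single m 1 : Fin k → ℕ) l ≠ 0 := by
  rcases eq_or_ne l m with rfl | h
  · rfl
  · simp [Pi.single_eq_of_ne h, Pi.single_eq_of_ne h.symm]
    tauto

lemma filter_Iic_sub_apply_ne_zero {n : Fin k → ℕ} (h : n l ≠ 0) :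
    (Iic n).filter (fun j => (n - j) l ≠ 0) = Iic (n - Pi.single l 1) := by
  ext j
  simp only [mem_filter, mem_Iic, Pi.le_def, Pi.sub_apply]
  constructor
  · rintro ⟨hj, hjl⟩ i
    rcases eq_or_ne i l with rfl | hi
    · simp only [Pi.single_eq_same]; omega
    · simpa [Pi.single_eq_of_ne hi] using hj i
  · intro hj
    refine ⟨fun i => (hj i).trans tsub_le_self, ?_⟩
    have := hj l
    simp only [Pi.single_eq_same] at this
    omega

end Index

noncomputable section

abbrev PolyFamily (k : ℕ) := (Fin k → ℕ) → ℂ[X]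

def translate (a : ℂ) : Module.End ℂ (PolyFamily k) where
  toFun f t := (f t).comp (X + C a)
  map_add' f g := by ext1 t; simp [add_comp]
  map_smul' c f := by ext1 t; simp [smul_comp]

@[simp] lemma translate_apply (a : ℂ) (f : PolyFamily k) (t : Fin k → ℕ) :
    translate a f t = (f t).comp (X + C a) := rfl

variable (μ : Fin k → ℕ)

def shift (l : Fin k) : Module.End ℂ (PolyFamily k) where
  toFun f t := if t l = 0 then 0 else (f (t - Pi.single l 1)).comp (X + C ((μ l : ℂ) - 1))
  map_add' f g := by
    ext1 t
    simp only [Pi.add_apply]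
    split_ifs <;> simp [add_comp]
  map_smul' c f := by
    ext1 t
    simp only [Pi.smul_apply, RingHom.id_apply]
    split_ifs <;> simp [smul_comp]

lemma shift_apply (l : Fin k) (f : PolyFamily k) (t : Fin k → ℕ) :
    shift μ l f t =
      if t l = 0 then 0 else (f (t - Pi.single l 1)).comp (X + C ((μ l : ℂ) - 1)) := rfl

def pascalOp : Module.End ℂ (PolyFamily k) := 1 - translate (-1) - ∑ l, shift μ l

variable {μ}

lemma mem_ker_pascalOp {f : PolyFamily k} :
    f ∈ LinearMap.ker (pascalOp μ) ↔ ∀ t, f t = (f t).comp (X - 1) + ∑ l, shift μ l f t := by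
  rw [LinearMap.mem_ker, funext_iff]
  refine forall_congr' fun t => ?_
  simp only [pascalOp, LinearMap.sub_apply, Module.End.one_apply, LinearMap.coe_sum,
    Finset.sum_apply, Pi.sub_apply, Pi.zero_apply, translate_apply, map_neg, C_1]
  rw [sub_sub, sub_eq_zero, ← sub_eq_add_neg]

lemma commute_translate_translate (a b : ℂ) : Commute (translate (k := k) a) (translate b) := by
  ext f t : 2
  exact comp_X_add_C_comm _ _ _

lemma commute_translate_shift (a : ℂ) (l : Fin k) : Commute (translate a) (shift μ l) := by
  ext f t : 2
  simp only [Module.End.mul_apply, translate_apply, shift_apply]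
  split_ifs
  · exact zero_comp
  · exact comp_X_add_C_comm _ _ _

lemma commute_shift_shift (l m : Fin k) : Commute (shift μ l) (shift μ m) := by
  ext f t : 2
  simp only [Module.End.mul_apply, shift_apply]
  have hcond := ne_zero_and_sub_single_ne_zero_comm (t := t) (l := l) (m := m)
  split_ifs <;> (try simp only [zero_comp]) <;>
    first
    | rfl
    | (rw [tsub_right_comm]; exact comp_X_add_C_comm _ _ _)
    | (exfalso; tauto)

lemma map_mem_ker_pascalOp {T : Module.End ℂ (PolyFamily k)}
    (h₁ : Commute T (translate (-1))) (h₂ : ∀ l, Commute T (shift μ l)) {f : PolyFamily k}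
    (hf : f ∈ LinearMap.ker (pascalOp μ)) : T f ∈ LinearMap.ker (pascalOp μ) := by
  have hT : Commute T (pascalOp μ) :=
    ((Commute.one_right T).sub_right h₁).sub_right (Commute.sum_right _ _ _ fun l _ => h₂ l)
  rw [LinearMap.mem_ker] at hf ⊢
  rw [← Module.End.mul_apply, ← hT.eq, Module.End.mul_apply, hf, map_zero]

lemma translate_mem_ker_pascalOp (a : ℂ) {f : PolyFamily k}
    (hf : f ∈ LinearMap.ker (pascalOp μ)) : translate a f ∈ LinearMap.ker (pascalOp μ) :=
  map_mem_ker_pascalOp (commute_translate_translate a _) (commute_translate_shift a) hf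

lemma shift_mem_ker_pascalOp (l : Fin k) {f : PolyFamily k}
    (hf : f ∈ LinearMap.ker (pascalOp μ)) : shift μ l f ∈ LinearMap.ker (pascalOp μ) :=
  map_mem_ker_pascalOp (commute_translate_shift _ l).symm (commute_shift_shift l) hf

theorem eq_zero_of_mem_ker_pascalOp {f : PolyFamily k} (hf : f ∈ LinearMap.ker (pascalOp μ))
    (h₀ : ∀ t, (f t).eval 0 = 0) : f = 0 := by
  rw [mem_ker_pascalOp] at hf
  have hnat : ∀ t (m : ℕ), (f t).eval (m : ℂ) = 0 := by
    intro t
    induction t using WellFoundedLT.induction with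
    | _ t ih =>
      intro m
      induction m with
      | zero => simpa using h₀ t
      | succ m ihm =>
        rw [hf t, eval_add, eval_comp, eval_finsetSum]
        simp only [eval_sub, eval_X, eval_one, Nat.cast_succ, add_sub_cancel_right, ihm, zero_add]
        refine sum_eq_zero fun l _ => ?_
        rw [shift_apply]
        split_ifs with hl
        · exact eval_zero
        · rw [eval_comp, ← ih _ (sub_single_lt hl) (m + μ l)]
          simp only [eval_add, eval_X, eval_C]
          push_cast
          ring_nf
  funext t
  exact eq_zero_of_infinite_isRoot _
    ((Set.infinite_range_of_injective Nat.cast_injective).mono (by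
      rintro _ ⟨m, rfl⟩
      exact hnat t m))

def conv (w : (Fin k → ℕ) → ℂ) : Module.End ℂ (PolyFamily k) where
  toFun g n := ∑ j ∈ Iic n, C (w j) * g (n - j)
  map_add' f g := by ext1 n; simp [mul_add, sum_add_distrib]
  map_smul' c f := by ext1 n; simp [smul_sum]

lemma conv_apply (w : (Fin k → ℕ) → ℂ) (g : PolyFamily k) (n : Fin k → ℕ) :
    conv w g n = ∑ j ∈ Iic n, C (w j) * g (n - j) := rfl

lemma commute_conv_translate (w : (Fin k → ℕ) → ℂ) (a : ℂ) :
    Commute (conv w) (translate a) := by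
  ext g n : 2
  simp [conv_apply, Polynomial.sum_comp, mul_comp]

lemma commute_conv_shift (w : (Fin k → ℕ) → ℂ) (l : Fin k) :
    Commute (conv w) (shift μ l) := by
  ext g n : 2
  simp only [Module.End.mul_apply, conv_apply, shift_apply, mul_ite, mul_zero]
  split_ifs with hn
  · exact sum_eq_zero fun j hj => if_pos (by simp [hn])
  · rw [sum_ite, sum_const_zero, zero_add, filter_Iic_sub_apply_ne_zero hn, Polynomial.sum_comp]
    refine sum_congr rfl fun j _ => ?_
    rw [mul_comp, C_comp, tsub_right_comm]

lemma eval_conv_zero (w : (Fin k → ℕ) → ℂ) {g : PolyFamily k}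
    (hg : ∀ t, (g t).eval 0 = if t = 0 then 1 else 0) (n : Fin k → ℕ) :
    (conv w g n).eval 0 = w n := by
  rw [conv_apply, eval_finsetSum, sum_eq_single_of_mem n (mem_Iic.2 le_rfl)]
  · simp [hg]
  · intro j hj hjn
    rw [eval_mul, hg, if_neg (fun h => hjn (le_antisymm (mem_Iic.1 hj) (tsub_eq_zero_iff_le.1 h))),
      mul_zero]

theorem sum_eval_mul_eval {f g : PolyFamily k} (hf : f ∈ LinearMap.ker (pascalOp μ))
    (hg : g ∈ LinearMap.ker (pascalOp μ)) (hg₀ : ∀ t, (g t).eval 0 = if t = 0 then 1 else 0)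
    (a c : ℂ) (n : Fin k → ℕ) :
    ∑ j ∈ Iic n, (f j).eval a * (g (n - j)).eval c = (f n).eval (a + c) := by
  have key : conv (fun j => (f j).eval a) g = translate a f := by
    rw [← sub_eq_zero]
    refine eq_zero_of_mem_ker_pascalOp (sub_mem ?_ (translate_mem_ker_pascalOp a hf)) fun t => ?_
    · exact map_mem_ker_pascalOp (commute_conv_translate _ _) (commute_conv_shift _) hg
    · simp [eval_conv_zero _ hg₀, eval_comp]
  simpa [conv_apply, eval_finsetSum, eval_comp, add_comm c] using
    congrArg (fun F => (F n).eval c) key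

variable (μ) in
def fussBinom : PolyFamily k := fun t =>
  C (∏ i, ((t i)! : ℂ))⁻¹ * (descPochhammer ℂ (∑ i, t i)).comp (X + C (∑ i, (t i : ℂ) * μ i))

lemma eval_fussBinom (t : Fin k → ℕ) (r : ℂ) :
    (fussBinom μ t).eval r =
      (descPochhammer ℂ (∑ i, t i)).eval (∑ i, (t i : ℂ) * μ i + r) / ∏ i, ((t i)! : ℂ) := by
  simp only [fussBinom, eval_mul, eval_C, eval_comp, eval_add, eval_X]
  rw [div_eq_inv_mul, add_comm r]

lemma eval_shift_fussBinom (l : Fin k) (t : Fin k → ℕ) (r : ℂ) :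
    (shift μ l (fussBinom μ) t).eval r = t l *
      (descPochhammer ℂ (∑ i, t i - 1)).eval (∑ i, (t i : ℂ) * μ i + r - 1) /
        ∏ i, ((t i)! : ℂ) := by
  rw [shift_apply]
  split_ifs with hl
  · simp [hl]
  · rw [eval_comp, eval_fussBinom, sum_sub_single hl, weightedSum_sub_single hl,
      prod_factorial_eq_mul hl]
    have : (∏ i, (((t - Pi.single l 1 : Fin k → ℕ) i)! : ℂ)) ≠ 0 :=
      prod_ne_zero_iff.2 fun i _ => Nat.cast_ne_zero.2 (Nat.factorial_ne_zero _)
    simp only [eval_add, eval_X, eval_C]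
    field_simp
    ring_nf

lemma fussBinom_mem_ker_pascalOp : fussBinom μ ∈ LinearMap.ker (pascalOp μ) := by
  refine mem_ker_pascalOp.2 fun t => Polynomial.funext fun r => ?_
  simp only [eval_add, eval_comp, eval_sub, eval_X, eval_one, eval_finsetSum,
    eval_shift_fussBinom, eval_fussBinom]
  rw [← sum_div, ← sum_mul, ← Nat.cast_sum, ← add_div,
    descPochhammer_eval_eq_eval_sub_one_add]
  ring_nf

variable (μ) in
def fussCatalan : PolyFamily k := fussBinom μ - ∑ l, (μ l : ℂ) • shift μ l (fussBinom μ)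

lemma fussCatalan_mem_ker_pascalOp : fussCatalan μ ∈ LinearMap.ker (pascalOp μ) :=
  sub_mem fussBinom_mem_ker_pascalOp <| sum_mem fun l _ =>
    Submodule.smul_mem _ _ (shift_mem_ker_pascalOp l fussBinom_mem_ker_pascalOp)

lemma eval_fussCatalan_of_ne_zero {t : Fin k → ℕ} (ht : ∑ i, t i ≠ 0) (r : ℂ) :
    (fussCatalan μ t).eval r = r *
      (descPochhammer ℂ (∑ i, t i - 1)).eval (∑ i, (t i : ℂ) * μ i + r - 1) /
        ∏ i, ((t i)! : ℂ) := by
  obtain ⟨S, hS⟩ : ∃ S, ∑ i, t i = S + 1 := Nat.exists_eq_succ_of_ne_zero ht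
  simp only [fussCatalan, Pi.sub_apply, Finset.sum_apply, Pi.smul_apply, eval_sub, eval_finsetSum,
    eval_smul, smul_eq_mul, eval_fussBinom, eval_shift_fussBinom]
  rw [hS, Nat.add_sub_cancel, descPochhammer_succ_left, eval_mul, eval_X, eval_comp, eval_sub,
    eval_X, eval_one]
  have hsum : ∀ P : ℂ, ∑ l, (μ l : ℂ) * (t l * P) = (∑ l, (t l : ℂ) * μ l) * P := fun P => by
    rw [sum_mul]
    exact sum_congr rfl fun l _ => by ring
  simp only [mul_div_assoc', ← sum_div, hsum]
  ring

lemma eval_fussCatalan (t : Fin k → ℕ) (r : ℂ) :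
    (fussCatalan μ t).eval r = mfc (fun i => (μ i : ℂ)) r t := by
  unfold mfc
  split_ifs with ht
  · have h0 : ∀ i, t i = 0 := fun i => (sum_eq_zero_iff.1 ht) i (mem_univ i)
    simp [fussCatalan, eval_finsetSum, eval_fussBinom, eval_shift_fussBinom, h0]
  · rw [eval_fussCatalan_of_ne_zero ht, descPochhammer_eval_eq_prod_range,
      ← Ico_add_one_right_eq_Icc, prod_Ico_eq_prod_range, Nat.sub_add_cancel (by omega),
      mul_div_right_comm]
    congr 1
    exact prod_congr rfl fun j _ => by push_cast; ring

lemma eval_fussCatalan_zero (t : Fin k → ℕ) :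
    (fussCatalan μ t).eval 0 = if t = 0 then 1 else 0 := by
  have hsum : ∑ i, t i = 0 ↔ t = 0 := by simp [sum_eq_zero_iff, funext_iff]
  rw [eval_fussCatalan]
  unfold mfc
  simp [hsum]

lemma mul_eval_shift_fussBinom (l : Fin k) (t : Fin k → ℕ) (r : ℂ) :
    r * (shift μ l (fussBinom μ) t).eval r = t l * (fussCatalan μ t).eval r := by
  by_cases ht : ∑ i, t i = 0
  · have hl : t l = 0 := (sum_eq_zero_iff.1 ht) l (mem_univ l)
    simp [shift_apply, hl]
  · rw [eval_shift_fussBinom, eval_fussCatalan_of_ne_zero ht]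
    ring

variable (μ) in
theorem sum_mfc_mul_mfc (a c : ℂ) (n : Fin k → ℕ) :
    ∑ j ∈ Iic n, mfc (fun i => (μ i : ℂ)) a j * mfc (fun i => (μ i : ℂ)) c (n - j) =
      mfc (fun i => (μ i : ℂ)) (a + c) n := by
  simpa only [eval_fussCatalan] using sum_eval_mul_eval fussCatalan_mem_ker_pascalOp
    fussCatalan_mem_ker_pascalOp eval_fussCatalan_zero a c n

lemma add_mul_sum_apply_mul_mfc_mul_mfc (i : Fin k) (a c : ℂ) (n : Fin k → ℕ) :
    (a + c) * ∑ j ∈ Iic n,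
        (j i : ℂ) * mfc (fun i => (μ i : ℂ)) a j * mfc (fun i => (μ i : ℂ)) c (n - j) =
      a * n i * mfc (fun i => (μ i : ℂ)) (a + c) n := by
  have hconv : ∑ j ∈ Iic n,
      (j i : ℂ) * mfc (fun i => (μ i : ℂ)) a j * mfc (fun i => (μ i : ℂ)) c (n - j) =
        a * (shift μ i (fussBinom μ) n).eval (a + c) := by
    rw [← sum_eval_mul_eval (shift_mem_ker_pascalOp i fussBinom_mem_ker_pascalOp)
      fussCatalan_mem_ker_pascalOp eval_fussCatalan_zero, mul_sum]
    refine sum_congr rfl fun j _ => ?_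
    rw [← eval_fussCatalan, ← eval_fussCatalan, ← mul_eval_shift_fussBinom]
    ring
  rw [hconv, mul_left_comm, mul_eval_shift_fussBinom, eval_fussCatalan, mul_assoc]

variable (μ) in
theorem add_mul_sum_weight_mul_mfc_mul_mfc (q : Fin k → ℂ) (a c : ℂ) (n : Fin k → ℕ) :
    (a + c) * ∑ j ∈ Iic n, (∑ i, q i * (j i : ℂ)) *
        mfc (fun i => (μ i : ℂ)) a j * mfc (fun i => (μ i : ℂ)) c (n - j) =
      a * (∑ i, q i * (n i : ℂ)) * mfc (fun i => (μ i : ℂ)) (a + c) n := by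
  calc _ = ∑ i, q i * ((a + c) * ∑ j ∈ Iic n,
        (j i : ℂ) * mfc (fun i => (μ i : ℂ)) a j * mfc (fun i => (μ i : ℂ)) c (n - j)) := by
        simp only [mul_sum, sum_mul]
        rw [sum_comm]
        exact sum_congr rfl fun _ _ => sum_congr rfl fun _ _ => by ring
    _ = _ := by
        simp only [add_mul_sum_apply_mul_mfc_mul_mfc]
        rw [mul_sum, sum_mul]
        exact sum_congr rfl fun _ _ => by ring

end

end MultiFussCatalan

open MultiFussCatalan

theorem mohanty_convolution_general {k : ℕ} (μ : Fin k → ℕ)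
    (p : ℕ)
    (n : Fin k → ℕ) (a c : ℂ) (hac : a + c ≠ 0) (q : Fin k → ℂ) :
    ∑ j ∈ Finset.Iic n,
        ((p : ℂ) + ∑ i, q i * (j i : ℂ)) *
          mfc (fun i => (μ i : ℂ)) a j * mfc (fun i => (μ i : ℂ)) c (n - j) =
      (((p : ℂ) * (a + c) + a * ∑ i, q i * (n i : ℂ)) / (a + c)) *
        mfc (fun i => (μ i : ℂ)) (a + c) n := by
  have split : ∑ j ∈ Iic n, ((p : ℂ) + ∑ i, q i * (j i : ℂ)) *
        mfc (fun i => (μ i : ℂ)) a j * mfc (fun i => (μ i : ℂ)) c (n - j) =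
      p * ∑ j ∈ Iic n, mfc (fun i => (μ i : ℂ)) a j * mfc (fun i => (μ i : ℂ)) c (n - j) +
        ∑ j ∈ Iic n, (∑ i, q i * (j i : ℂ)) *
          mfc (fun i => (μ i : ℂ)) a j * mfc (fun i => (μ i : ℂ)) c (n - j) := by
    rw [mul_sum, ← sum_add_distrib]
    exact sum_congr rfl fun _ _ => by ring
  rw [split, div_mul_eq_mul_div, eq_div_iff hac]
  linear_combination (p * (a + c)) * sum_mfc_mul_mfc μ a c n +
    add_mul_sum_weight_mul_mfc_mul_mfc μ q a c n

/-- Mohanty's generalized convolution identity: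
`∑_{j ≤ n} (p + q·j) 𝒜_j(μ, a) 𝒜_{n-j}(μ, c)
  = ((p(a+c) + a(q·n))/(a+c)) 𝒜_n(μ, a+c)`. -/
theorem mohanty_convolution {k : ℕ} (hk : 1 ≤ k) (μ : Fin k → ℕ)
    (hμ : ∀ i, 2 ≤ μ i) (r p : ℕ) (hr : 0 < r) (hp : 0 < p)
    (n : Fin k → ℕ) (a c : ℂ) (hac : a + c ≠ 0) (q : Fin k → ℂ) :
    ∑ j ∈ Finset.Iic n,
        ((p : ℂ) + ∑ i, q i * (j i : ℂ)) *
          mfc (fun i => (μ i : ℂ)) a j * mfc (fun i => (μ i : ℂ)) c (n - j) =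
      (((p : ℂ) * (a + c) + a * ∑ i, q i * (n i : ℂ)) / (a + c)) *
        mfc (fun i => (μ i : ℂ)) (a + c) n :=
  mohanty_convolution_general μ p n a c hac q
end

section
/- Kahkeshani's generalized Catalan number C(m,n) := (1/(n(m-1)+1)) · multinomial(2n(m-1); n,…,n (m-1 times), n(m-1)) equals the multiparameter Fuss–Catalan number 𝒜_{(n,…,n)}((2,…,2), 1) with k = m-1 components, for all integers m ≥ 2 and n ≥ 0. -/
open Finset

lemma aux_prod (a : ℕ) : ∀ b, b ≤ a →
    ((a - b).factorial : ℂ) * ∏ j ∈ Finset.Icc 1 b, ((a : ℂ) + 1 - j) = (a.factorial : ℂ) := by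
  intro b
  induction b with
  | zero => simp
  | succ b ih =>
    intro hb
    have h1 : ((a : ℂ) + 1 - (↑(b+1) : ℕ)) = ((a - b : ℕ) : ℂ) := by
      push_cast [Nat.cast_sub (by omega : b ≤ a)]
      ring
    have h2 : (a - (b+1)).factorial * (a - b) = (a - b).factorial := by
      have : a - b = (a - (b+1)) + 1 := by omega
      rw [this, Nat.factorial_succ]; ring
    rw [Finset.prod_Icc_succ_top (by omega), h1,
      mul_comm (∏ j ∈ Finset.Icc 1 b, ((a:ℂ)+1-j)) _, ← mul_assoc, ← Nat.cast_mul, h2]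
    exact ih (by omega)



/-- Kahkeshani's generalized Catalan number
`C(m,n) = (1/(n(m-1)+1)) · (2n(m-1); n,…,n, n(m-1))` equals the multiparameter
Fuss–Catalan number `𝒜_{(n,…,n)}((2,…,2), 1)` with `k = m-1` components. -/
theorem kahkeshani_eq_mfc (m n : ℕ) (hm : 2 ≤ m) :
    (1 / ((n : ℂ) * ((m : ℂ) - 1) + 1)) *
        (Nat.multinomial (Finset.univ : Finset (Fin m))
          (fun i => if (i : ℕ) < m - 1 then n else n * (m - 1)) : ℂ) =
      mfc (fun _ : Fin (m - 1) => (2 : ℂ)) 1 (fun _ => n) := by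
  obtain ⟨k, rfl⟩ : ∃ k, m = k + 2 := ⟨m - 2, by omega⟩
  have h21 : k + 2 - 1 = k + 1 := rfl
  set f : Fin (k+2) → ℕ := fun i => if (i : ℕ) < (k+2) - 1 then n else n * ((k+2) - 1) with hf
  have hsum : ∑ i, f i = 2 * (n * (k+1)) := by
    rw [Fin.sum_univ_castSucc]
    simp only [hf, Fin.coe_castSucc, Fin.val_last]
    rw [Finset.sum_congr rfl (fun i _ => if_pos (by omega))]
    simp only [Finset.sum_const, Finset.card_univ, Fintype.card_fin, smul_eq_mul]
    rw [if_neg (by omega)]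
    rw [h21]; ring
  have hprod : ∏ i, (f i).factorial = n.factorial ^ (k+1) * (n*(k+1)).factorial := by
    rw [Fin.prod_univ_castSucc]
    simp only [hf, Fin.coe_castSucc, Fin.val_last]
    rw [Finset.prod_congr rfl (fun i _ => by rw [if_pos (by omega)])]
    simp only [Finset.prod_const, Finset.card_univ, Fintype.card_fin]
    rw [if_neg (by omega), h21]
  have hspec := Nat.multinomial_spec (Finset.univ : Finset (Fin (k+2))) f
  rw [hsum, hprod] at hspec
  rcases Nat.eq_zero_or_pos n with hn | hn
  · subst hn
    simp at hspec
    rw [mfc]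
    simp [hspec]
  · -- n ≥ 1
    have hN : (1:ℕ) ≤ n * (k+1) := Nat.one_le_iff_ne_zero.mpr (by positivity)
    rw [mfc, if_neg (by simp; omega)]
    have hcard : ∑ i : Fin ((k+2)-1), n = (k+1) * n := by
      simp [Finset.sum_const, Finset.card_univ]
    have hμ : ∑ i : Fin ((k+2)-1), (n:ℂ) * 2 = ((2*(n*(k+1)) : ℕ) : ℂ) := by
      simp [Finset.sum_const, Finset.card_univ]
      push_cast; ring
    rw [hcard, hμ]
    have hfac : ∏ i : Fin ((k+2)-1), ((n.factorial : ℂ)) = (n.factorial : ℂ)^(k+1) := by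
      simp [Finset.prod_const, Finset.card_univ]
    rw [hfac]
    have e : (k+1)*n = n*(k+1) := by ring
    have hP := aux_prod (2*(n*(k+1))) ((k+1)*n - 1) (by omega)
    have harg : 2*(n*(k+1)) - ((k+1)*n - 1) = n*(k+1) + 1 := by
      have : (k+1)*n = n*(k+1) := by ring
      omega
    rw [harg, Nat.factorial_succ] at hP
    push_cast at hP
    have hspecC : ((n.factorial:ℂ))^(k+1) * ((n*(k+1)).factorial : ℂ) *
        (Nat.multinomial (Finset.univ : Finset (Fin (k+2))) f : ℂ)
        = ((2*(n*(k+1))).factorial : ℂ) := by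
      exact_mod_cast congrArg (Nat.cast : ℕ → ℂ) hspec
    have hc : (n:ℂ) * (((k+2:ℕ):ℂ) - 1) + 1 = (n:ℂ)*(k+1) + 1 := by push_cast; ring
    rw [hc]
    have hA : ((n.factorial : ℂ))^(k+1) ≠ 0 := by
      exact pow_ne_zero _ (Nat.cast_ne_zero.mpr n.factorial_ne_zero)
    have hB : ((n*(k+1)).factorial : ℂ) ≠ 0 := Nat.cast_ne_zero.mpr (Nat.factorial_ne_zero _)
    have hc0 : (n:ℂ)*(k+1) + 1 ≠ 0 := by
      have he : ((n*(k+1)+1 : ℕ):ℂ) = (n:ℂ)*(k+1) + 1 := by push_cast; ring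
      rw [← he]
      exact Nat.cast_ne_zero.mpr (Nat.succ_ne_zero _)
    rw [one_div, one_div, inv_mul_eq_div, inv_mul_eq_div, div_eq_div_iff hc0 hA]
    apply mul_left_cancel₀ hB
    push_cast at hspecC hP ⊢
    linear_combination hspecC - hP
end
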